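/- arXiv:2006.02935 — 2 statements merged into one kernel-verified Lean document; each statement's English description precedes it below -/
import Mathlib

section
/- The minimal value μ(a,b,n) of the optimal control problem is non-increasing in the dimension: if n ≤ m, then μ(a,b,m) ≤ μ(a,b,n). Concretely, given any admissible control S ∈ Sym(n)⁺ with a·I ≤ ∫₀ᵀ S ≤ b·I and initial condition ω₀ ∈ 𝕊ⁿ⁻¹, the block-diagonal control S̃ = diag(S, a·I_{m-n}) is admissible in dimension m, the trajectory starting from ω̃₀ = (ω₀, 0) is ω̃ = (ω, 0), and J(S̃, ω̃₀) = J(S, ω₀). -/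
open Matrix MeasureTheory intervalIntegral

/-- The set of costs `J(S,ω₀) = ∫₀ᵀ ωᵀSω dt` over admissible controls `S` (measurable,
positive semi-definite, with `a•1 ≤ ∫₀ᵀ S ≤ b•1`) and initial conditions `ω₀ ∈ 𝕊ⁿ⁻¹`,
where `ω` solves `ω' = -Sω + (ωᵀSω)ω`, `ω(0) = ω₀`. Its infimum is `μ(a,b,T,n)`. -/
def costSet (a b T : ℝ) (n : ℕ) : Set ℝ :=
  {J | ∃ (S : ℝ → Matrix (Fin n) (Fin n) ℝ) (ω : ℝ → Fin n → ℝ),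
    (∀ i j, Measurable fun t => S t i j) ∧
    (∀ t ∈ Set.Icc (0:ℝ) T, (S t).PosSemidef) ∧
    ((Matrix.of fun i j => ∫ t in (0:ℝ)..T, S t i j)
        - a • (1 : Matrix (Fin n) (Fin n) ℝ)).PosSemidef ∧
    (b • (1 : Matrix (Fin n) (Fin n) ℝ)
        - Matrix.of fun i j => ∫ t in (0:ℝ)..T, S t i j).PosSemidef ∧
    (∑ i, ω 0 i ^ 2 = 1) ∧
    (∀ t ∈ Set.Icc (0:ℝ) T,
      HasDerivAt ω (-(S t).mulVec (ω t) + (ω t ⬝ᵥ (S t).mulVec (ω t)) • ω t) t) ∧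
    J = ∫ t in (0:ℝ)..T, ω t ⬝ᵥ (S t).mulVec (ω t)}

/-- The block-diagonal extension `S̃ = diag (S, (a/T)•1_{m-n})` of an admissible
control in dimension `n` to dimension `m ≥ n`. -/
noncomputable def blockExt (a T : ℝ) (n m : ℕ) (S : ℝ → Matrix (Fin n) (Fin n) ℝ) :
    ℝ → Matrix (Fin m) (Fin m) ℝ :=
  fun t => Matrix.of fun i j =>
    if h1 : (i : ℕ) < n then
      (if h2 : (j : ℕ) < n then S t ⟨i, h1⟩ ⟨j, h2⟩ else 0)
    else (if i = j then a / T else 0)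

/-- The extension `(ω, 0)` of a trajectory to dimension `m ≥ n`. -/
def vecExt (n m : ℕ) (ω : ℝ → Fin n → ℝ) : ℝ → Fin m → ℝ :=
  fun t i => if h : (i : ℕ) < n then ω t ⟨i, h⟩ else 0

/-!
Padding by zeros embeds the problem in dimension `n` into dimension `n + k`. Reindexed along
`Fin (n + k) ≃ Fin n ⊕ Fin k`, the extended control is block diagonal, `diag (S, (a/T) • 1)`:
it is positive semidefinite, its integral `diag (∫ S, a • 1)` still lies between `a • 1` and
`b • 1`, and it maps `(x, 0)` to `(S x, 0)`. Hence `(ω, 0)` solves the extended equation with the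
same cost, so every cost in dimension `n` is a cost in dimension `n + k`; as all costs are
nonnegative and some exist in every positive dimension, the infima compare accordingly.
-/

namespace Matrix

variable {ι κ R : Type*}

theorem fromBlocks_zero_sub_smul_one [DecidableEq ι] [DecidableEq κ] [Ring R]
    (A : Matrix ι ι R) (D : Matrix κ κ R) (c : R) :
    fromBlocks A 0 0 D - c • 1 = fromBlocks (A - c • 1) 0 0 (D - c • 1) := by
  rw [← fromBlocks_one, fromBlocks_smul]
  ext (i | i) (j | j) <;> simp

theorem smul_one_sub_fromBlocks_zero [DecidableEq ι] [DecidableEq κ] [Ring R]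
    (A : Matrix ι ι R) (D : Matrix κ κ R) (c : R) :
    c • 1 - fromBlocks A 0 0 D = fromBlocks (c • 1 - A) 0 0 (c • 1 - D) := by
  rw [← fromBlocks_one, fromBlocks_smul]
  ext (i | i) (j | j) <;> simp

theorem PosSemidef.fromBlocks_zero [Fintype ι] [Fintype κ]
    [CommRing R] [PartialOrder R] [StarRing R] [StarOrderedRing R]
    {A : Matrix ι ι R} {D : Matrix κ κ R}
    (hA : A.PosSemidef) (hD : D.PosSemidef) : (fromBlocks A 0 0 D).PosSemidef := by
  refine posSemidef_iff_dotProduct_mulVec.mpr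
    ⟨hA.isHermitian.fromBlocks (by simp) hD.isHermitian, fun x => ?_⟩
  rw [← Sum.elim_comp_inl_inr x, fromBlocks_mulVec]
  simp only [zero_mulVec, add_zero, zero_add, Sum.elim_comp_inl, Sum.elim_comp_inr,
    Function.star_sumElim, sumElim_dotProduct_sumElim]
  exact add_nonneg (hA.dotProduct_mulVec_nonneg _) (hD.dotProduct_mulVec_nonneg _)

end Matrix

theorem Fin.natAdd_ne_castAdd {n k : ℕ} (i : Fin k) (j : Fin n) :
    Fin.natAdd n i ≠ Fin.castAdd k j := by
  simp only [ne_eq, Fin.ext_iff, Fin.val_natAdd, Fin.val_castAdd]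
  omega

section Extension

variable {n k : ℕ} {a b T : ℝ} {S : ℝ → Matrix (Fin n) (Fin n) ℝ}

def zeroExtend (n m : ℕ) : (Fin n → ℝ) →ₗ[ℝ] Fin m → ℝ where
  toFun x i := if h : (i : ℕ) < n then x ⟨i, h⟩ else 0
  map_add' x y := by ext i; by_cases h : (i : ℕ) < n <;> simp [h]
  map_smul' c x := by ext i; by_cases h : (i : ℕ) < n <;> simp [h]

theorem vecExt_eq_comp (m : ℕ) (ω : ℝ → Fin n → ℝ) : vecExt n m ω = zeroExtend n m ∘ ω := rfl

theorem zeroExtend_dotProduct_zeroExtend (x y : Fin n → ℝ) :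
    zeroExtend n (n + k) x ⬝ᵥ zeroExtend n (n + k) y = x ⬝ᵥ y := by
  simp [dotProduct, Fin.sum_univ_add, zeroExtend]

theorem blockExt_mulVec_zeroExtend (x : Fin n → ℝ) (t : ℝ) :
    blockExt a T n (n + k) S t *ᵥ zeroExtend n (n + k) x = zeroExtend n (n + k) (S t *ᵥ x) := by
  ext i
  induction i using Fin.addCases <;>
    simp [mulVec, dotProduct, Fin.sum_univ_add, zeroExtend, blockExt, Fin.natAdd_ne_castAdd]

theorem blockExt_submatrix (t : ℝ) :
    (blockExt a T n (n + k) S t).submatrix finSumFinEquiv finSumFinEquiv =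
      fromBlocks (S t) 0 0 ((a / T) • 1) := by
  ext (i | i) (j | j) <;> simp [blockExt, one_apply, Fin.natAdd_ne_castAdd]

theorem integral_blockExt_submatrix (hT : T ≠ 0) :
    (of fun i j => ∫ t in (0:ℝ)..T, blockExt a T n (n + k) S t i j).submatrix
        finSumFinEquiv finSumFinEquiv =
      fromBlocks (of fun i j => ∫ t in (0:ℝ)..T, S t i j) 0 0 (a • 1) := by
  ext (i | i) (j | j) <;> simp [blockExt, one_apply, Fin.natAdd_ne_castAdd, mul_div_cancel₀ _ hT]

theorem posSemidef_blockExt (ha : 0 ≤ a) (hT : 0 ≤ T) {t : ℝ} (hS : (S t).PosSemidef) :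
    (blockExt a T n (n + k) S t).PosSemidef := by
  rw [← posSemidef_submatrix_equiv finSumFinEquiv, blockExt_submatrix]
  exact hS.fromBlocks_zero (PosSemidef.one.smul (div_nonneg ha hT))

theorem posSemidef_integral_blockExt_sub (hT : T ≠ 0)
    (hS : ((of fun i j => ∫ t in (0:ℝ)..T, S t i j) - a • 1).PosSemidef) :
    ((of fun i j => ∫ t in (0:ℝ)..T, blockExt a T n (n + k) S t i j) - a • 1).PosSemidef := by
  rw [← posSemidef_submatrix_equiv finSumFinEquiv]
  simp only [submatrix_sub, submatrix_smul, Pi.sub_apply, Pi.smul_apply, submatrix_one_equiv]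
  rw [integral_blockExt_submatrix hT, fromBlocks_zero_sub_smul_one, sub_self]
  exact hS.fromBlocks_zero .zero

theorem posSemidef_sub_integral_blockExt (hT : T ≠ 0) (hab : a ≤ b)
    (hS : (b • 1 - of fun i j => ∫ t in (0:ℝ)..T, S t i j).PosSemidef) :
    (b • 1 - of fun i j => ∫ t in (0:ℝ)..T, blockExt a T n (n + k) S t i j).PosSemidef := by
  rw [← posSemidef_submatrix_equiv finSumFinEquiv]
  simp only [submatrix_sub, submatrix_smul, Pi.sub_apply, Pi.smul_apply, submatrix_one_equiv]
  rw [integral_blockExt_submatrix hT, smul_one_sub_fromBlocks_zero, ← sub_smul]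
  exact hS.fromBlocks_zero (PosSemidef.one.smul (sub_nonneg.2 hab))

theorem sum_vecExt_sq (ω : ℝ → Fin n → ℝ) (t : ℝ) :
    ∑ i, vecExt n (n + k) ω t i ^ 2 = ∑ i, ω t i ^ 2 := by
  rw [vecExt_eq_comp]
  simpa only [Function.comp_apply, dotProduct, sq] using
    zeroExtend_dotProduct_zeroExtend (k := k) (ω t) (ω t)

theorem vecExt_dotProduct_blockExt_mulVec (ω : ℝ → Fin n → ℝ) (t : ℝ) :
    vecExt n (n + k) ω t ⬝ᵥ blockExt a T n (n + k) S t *ᵥ vecExt n (n + k) ω t =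
      ω t ⬝ᵥ S t *ᵥ ω t := by
  rw [vecExt_eq_comp, Function.comp_apply, blockExt_mulVec_zeroExtend,
    zeroExtend_dotProduct_zeroExtend]

theorem hasDerivAt_vecExt {ω : ℝ → Fin n → ℝ} {t : ℝ}
    (hω : HasDerivAt ω (-(S t).mulVec (ω t) + (ω t ⬝ᵥ (S t).mulVec (ω t)) • ω t) t) :
    HasDerivAt (vecExt n (n + k) ω)
      (-(blockExt a T n (n + k) S t).mulVec (vecExt n (n + k) ω t)
        + (vecExt n (n + k) ω t ⬝ᵥ (blockExt a T n (n + k) S t).mulVec (vecExt n (n + k) ω t))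
          • vecExt n (n + k) ω t) t := by
  rw [vecExt_eq_comp, Function.comp_apply, blockExt_mulVec_zeroExtend,
    zeroExtend_dotProduct_zeroExtend, ← map_smul, ← map_neg, ← map_add]
  exact (zeroExtend n (n + k)).toContinuousLinearMap.hasFDerivAt.comp_hasDerivAt t hω

theorem measurable_blockExt_apply {m : ℕ} (hS : ∀ i j, Measurable fun t => S t i j)
    (i j : Fin m) : Measurable fun t => blockExt a T n m S t i j := by
  simp only [blockExt, of_apply]
  split_ifs
  exacts [hS _ _, measurable_const, measurable_const, measurable_const]

end Extension

section CostSet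

variable {a b T : ℝ} {n : ℕ}

theorem nonneg_of_mem_costSet (hT : 0 ≤ T) {J : ℝ} (hJ : J ∈ costSet a b T n) : 0 ≤ J := by
  obtain ⟨S, ω, -, hpsd, -, -, -, -, rfl⟩ := hJ
  exact intervalIntegral.integral_nonneg hT fun t ht => (hpsd t ht).dotProduct_mulVec_nonneg (ω t)

theorem costSet_nonempty (hn : 1 ≤ n) (ha : 0 ≤ a) (hab : a ≤ b) (hT : 0 < T) :
    (costSet a b T n).Nonempty := by
  set v : Fin n → ℝ := Pi.single ⟨0, hn⟩ 1
  have hv : v ⬝ᵥ v = 1 := by simp [v]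
  have hint : (of fun i j => ∫ _ in (0:ℝ)..T, ((a / T) • (1 : Matrix (Fin n) (Fin n) ℝ)) i j)
      = a • 1 := by
    ext i j
    simp [one_apply, mul_div_cancel₀ _ hT.ne']
  refine ⟨_, fun _ => (a / T) • 1, fun _ => v, fun _ _ => measurable_const,
    fun _ _ => PosSemidef.one.smul (div_nonneg ha hT.le), ?_, ?_, ?_, fun t _ => ?_, rfl⟩
  · rw [hint, sub_self]
    exact .zero
  · rw [hint, ← sub_smul]
    exact PosSemidef.one.smul (sub_nonneg.2 hab)
  · simpa [dotProduct, sq] using hv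
  · simpa [smul_mulVec, hv] using hasDerivAt_const t v

theorem costSet_subset_costSet_add (ha : 0 ≤ a) (hab : a ≤ b) (hT : 0 < T) (k : ℕ) :
    costSet a b T n ⊆ costSet a b T (n + k) := by
  rintro J ⟨S, ω, hmeas, hpsd, hlow, hup, hinit, hode, rfl⟩
  refine ⟨blockExt a T n (n + k) S, vecExt n (n + k) ω, measurable_blockExt_apply hmeas,
    fun t ht => posSemidef_blockExt ha hT.le (hpsd t ht),
    posSemidef_integral_blockExt_sub hT.ne' hlow, posSemidef_sub_integral_blockExt hT.ne' hab hup,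
    (sum_vecExt_sq ω 0).trans hinit, fun t ht => hasDerivAt_vecExt (hode t ht), ?_⟩
  simp only [vecExt_dotProduct_blockExt_mulVec]

end CostSet

/-- Monotonicity in the dimension of the minimal value `μ(a,b,n)`: if `n ≤ m` then
`μ(a,b,m) ≤ μ(a,b,n)`.  Concretely, for any admissible control `S` and initial
condition `ω₀ ∈ 𝕊ⁿ⁻¹` with trajectory `ω`, the block-diagonal control
`S̃ = diag (S, (a/T)•1_{m-n})` is admissible in dimension `m`, the trajectory from
`ω̃₀ = (ω₀,0)` is `ω̃ = (ω,0)`, and `J(S̃, ω̃₀) = J(S, ω₀)`. -/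
theorem mu_mono_dim (n m : ℕ) (hn : 1 ≤ n) (hnm : n ≤ m)
    (a b T : ℝ) (ha : 0 < a) (hab : a ≤ b) (hT : 0 < T) :
    sInf (costSet a b T m) ≤ sInf (costSet a b T n) ∧
    ∀ (S : ℝ → Matrix (Fin n) (Fin n) ℝ) (ω : ℝ → Fin n → ℝ),
      (∀ t ∈ Set.Icc (0:ℝ) T, (S t).PosSemidef) →
      ((Matrix.of fun i j => ∫ t in (0:ℝ)..T, S t i j)
          - a • (1 : Matrix (Fin n) (Fin n) ℝ)).PosSemidef →
      (b • (1 : Matrix (Fin n) (Fin n) ℝ)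
          - Matrix.of fun i j => ∫ t in (0:ℝ)..T, S t i j).PosSemidef →
      (∑ i, ω 0 i ^ 2 = 1) →
      (∀ t ∈ Set.Icc (0:ℝ) T,
        HasDerivAt ω (-(S t).mulVec (ω t) + (ω t ⬝ᵥ (S t).mulVec (ω t)) • ω t) t) →
      ((∀ t ∈ Set.Icc (0:ℝ) T, (blockExt a T n m S t).PosSemidef) ∧
       ((Matrix.of fun i j => ∫ t in (0:ℝ)..T, blockExt a T n m S t i j)
          - a • (1 : Matrix (Fin m) (Fin m) ℝ)).PosSemidef ∧
       (b • (1 : Matrix (Fin m) (Fin m) ℝ)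
          - Matrix.of fun i j => ∫ t in (0:ℝ)..T, blockExt a T n m S t i j).PosSemidef ∧
       (∑ i, vecExt n m ω 0 i ^ 2 = 1) ∧
       (∀ t ∈ Set.Icc (0:ℝ) T,
         HasDerivAt (vecExt n m ω)
           (-(blockExt a T n m S t).mulVec (vecExt n m ω t)
             + (vecExt n m ω t ⬝ᵥ (blockExt a T n m S t).mulVec (vecExt n m ω t))
               • vecExt n m ω t) t) ∧
       (∫ t in (0:ℝ)..T, vecExt n m ω t ⬝ᵥ (blockExt a T n m S t).mulVec (vecExt n m ω t))
          = ∫ t in (0:ℝ)..T, ω t ⬝ᵥ (S t).mulVec (ω t)) := by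
  obtain ⟨k, rfl⟩ := Nat.exists_eq_add_of_le hnm
  refine ⟨csInf_le_csInf ⟨0, fun _ => nonneg_of_mem_costSet hT.le⟩
    (costSet_nonempty hn ha.le hab hT) (costSet_subset_costSet_add ha.le hab hT k), ?_⟩
  intro S ω hpsd hlow hup hinit hode
  exact ⟨fun t ht => posSemidef_blockExt ha.le hT.le (hpsd t ht),
    posSemidef_integral_blockExt_sub hT.ne' hlow, posSemidef_sub_integral_blockExt hT.ne' hab hup,
    (sum_vecExt_sq ω 0).trans hinit, fun t ht => hasDerivAt_vecExt (hode t ht),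
    by simp only [vecExt_dotProduct_blockExt_mulVec]⟩
end

section
/- If S satisfies the persistent excitation condition a·I ≤ ∫ₜ^{t+T} S dτ ≤ b·I for all t ≥ 0, and μ = μ(a,b,n) denotes the minimal cost of the optimal control problem over one period, then the fundamental matrix satisfies ‖Φ_S(t,s)‖ ≤ e^{-μ·⌊(t-s)/T⌋} for all t ≥ s ≥ 0. -/
/-!
For a solution `x` of `x' = -S x` the unit vector `ω = x / ‖x‖` solves
`ω' = -S ω + (ωᵀ S ω) ω`, while `(log ‖x‖)' = -ωᵀ S ω`. Over a window of length `T` the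
decrease of `log ‖x‖` is therefore the cost of an admissible pair, hence at least `μ`, so `‖x‖`
shrinks by the factor `e^{-μ}` on every window; as `‖x‖` is nonincreasing, `⌊(t - s)/T⌋` windows
give the bound.

Two technical points. `S` is not assumed measurable, but on `[0, ∞)` it agrees with the
measurable function `-(∂ₜ Φ(t, 0)) Φ(t, 0)⁻¹`. This needs `Φ(t, 0)` invertible, i.e. that no
solution reaches `0`: `log ‖x‖` decreases at rate at most `tr S`, which is locally integrable
because the lower persistent-excitation bound with `a > 0` forces every diagonal entry of `S` to be
integrable on each window.
-/

open Matrix MeasureTheory intervalIntegral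

attribute [local instance] Matrix.normedAddCommGroup Matrix.normedSpace

open Real Set

theorem log_sub_integral_le_log {g g' c : ℝ → ℝ} {s t : ℝ} (hst : s ≤ t)
    (hg : ∀ τ ∈ Icc s t, HasDerivAt g (g' τ) τ) (hpos : ∀ τ ∈ Icc s t, 0 < g τ)
    (hc : IntervalIntegrable c volume s t) (hg' : ∀ τ ∈ Icc s t, -(c τ * g τ) ≤ g' τ) :
    log (g s) - ∫ τ in s..t, c τ ≤ log (g t) := by
  have hlog : ∀ τ ∈ Icc s t, HasDerivAt (fun σ => log (g σ)) (g' τ / g τ) τ :=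
    fun τ hτ => (hg τ hτ).log (hpos τ hτ).ne'
  have := integral_le_sub_of_hasDeriv_right_of_le (φ := fun τ => -c τ) hst
    (fun τ hτ => (hlog τ hτ).continuousAt.continuousWithinAt)
    (fun τ hτ => (hlog τ (Ioo_subset_Icc_self hτ)).hasDerivWithinAt)
    ((intervalIntegrable_iff_integrableOn_Icc_of_le hst).1 hc.neg)
    (fun τ hτ => by
      rw [le_div_iff₀ (hpos τ (Ioo_subset_Icc_self hτ))]
      linarith [hg' τ (Ioo_subset_Icc_self hτ)])
  rw [intervalIntegral.integral_neg] at this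
  linarith

theorem pos_of_hasDerivAt_of_neg_mul_le {g g' c : ℝ → ℝ} {s t : ℝ} (hst : s ≤ t)
    (hg : ∀ τ ∈ Icc s t, HasDerivAt g (g' τ) τ) (hc : IntervalIntegrable c volume s t)
    (hc0 : ∀ τ ∈ Icc s t, 0 ≤ c τ) (hg' : ∀ τ ∈ Icc s t, -(c τ * g τ) ≤ g' τ)
    (hs : 0 < g s) : 0 < g t := by
  by_contra! ht
  have hcont : ContinuousOn g (Icc s t) := fun τ hτ => (hg τ hτ).continuousAt.continuousWithinAt
  set Z := Icc s t ∩ g ⁻¹' Iic 0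
  have hZ : IsClosed Z := hcont.preimage_isClosed_of_isClosed isClosed_Icc isClosed_Iic
  have hZne : Z.Nonempty := ⟨t, ⟨hst, le_rfl⟩, ht⟩
  have hZbdd : BddBelow Z := ⟨s, fun τ hτ => hτ.1.1⟩
  -- `t₀` is the first point of `[s, t]` where `g ≤ 0`; before it `log g ≥ log (g s) - ∫ c`.
  set t₀ := sInf Z
  have ht₀ : t₀ ∈ Z := hZ.csInf_mem hZne hZbdd
  have hst₀ : s < t₀ := lt_of_le_of_ne ht₀.1.1 fun h => (h ▸ ht₀.2 : g s ≤ 0).not_gt hs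
  have hpos : ∀ τ ∈ Ico s t₀, 0 < g τ := fun τ hτ => by
    by_contra! h
    exact (csInf_le hZbdd ⟨⟨hτ.1, hτ.2.le.trans ht₀.1.2⟩, h⟩).not_gt hτ.2
  have hbound : ∀ τ ∈ Ico s t₀, exp (log (g s) - ∫ σ in s..t, c σ) ≤ g τ := fun τ hτ => by
    have hsub : Icc s τ ⊆ Icc s t := Icc_subset_Icc le_rfl (hτ.2.le.trans ht₀.1.2)
    have hmono : ∫ σ in s..τ, c σ ≤ ∫ σ in s..t, c σ :=
      integral_mono_interval le_rfl hτ.1 (hτ.2.le.trans ht₀.1.2)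
        ((ae_restrict_iff' measurableSet_Ioc).2 (Filter.Eventually.of_forall
          fun σ hσ => hc0 σ (Ioc_subset_Icc_self hσ))) hc
    have := log_sub_integral_le_log hτ.1 (fun σ hσ => hg σ (hsub hσ))
      (fun σ hσ => hpos σ ⟨hσ.1, hσ.2.trans_lt hτ.2⟩) (hc.mono_set (by
        rw [uIcc_of_le hτ.1, uIcc_of_le hst]; exact hsub)) (fun σ hσ => hg' σ (hsub hσ))
    calc exp (log (g s) - ∫ σ in s..t, c σ) ≤ exp (log (g τ)) := exp_le_exp.2 (by linarith)
      _ = g τ := exp_log (hpos τ hτ)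
  have hlim := ContinuousWithinAt.closure_le (by rw [closure_Ico hst₀.ne]; exact ⟨hst₀.le, le_rfl⟩)
    continuousWithinAt_const ((hcont t₀ ht₀.1).mono (Ico_subset_Icc_self.trans
      (Icc_subset_Icc le_rfl ht₀.1.2))) hbound
  exact (exp_pos _).not_ge (hlim.trans ht₀.2)

theorem intervalIntegrable_of_forall_window {E : Type*} [NormedAddCommGroup E] {f : ℝ → E}
    {p q T : ℝ} (hT : 0 < T) (hf : ∀ t, p ≤ t → IntervalIntegrable f volume t (t + T))
    (hpq : p ≤ q) : IntervalIntegrable f volume p q := by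
  have hk : ∀ k : ℕ, IntervalIntegrable f volume p (p + k * T) := by
    intro k
    induction k with
    | zero => simp
    | succ k ih =>
      rw [Nat.cast_succ, add_one_mul, ← add_assoc]
      exact ih.trans (hf _ (le_add_of_nonneg_right (by positivity)))
  obtain ⟨k, hk'⟩ := exists_nat_gt ((q - p) / T)
  rw [div_lt_iff₀ hT] at hk'
  refine (hk k).mono_set ?_
  rw [uIcc_of_le hpq, uIcc_of_le (le_add_of_nonneg_right (by positivity))]
  exact Icc_subset_Icc le_rfl (by linarith)

theorem AntitoneOn.le_pow_floor_mul {f : ℝ → ℝ} {s T q : ℝ} (hf : AntitoneOn f (Ici s))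
    (hT : 0 < T) (hq : 0 ≤ q) (hstep : ∀ p, s ≤ p → f (p + T) ≤ q * f p) {t : ℝ} (hst : s ≤ t) :
    f t ≤ q ^ ⌊(t - s) / T⌋₊ * f s := by
  have hiter : ∀ k : ℕ, f (s + k * T) ≤ q ^ k * f s := by
    intro k
    induction k with
    | zero => simp
    | succ k ih =>
      rw [Nat.cast_succ, add_one_mul, ← add_assoc, pow_succ', mul_assoc]
      exact (hstep _ (le_add_of_nonneg_right (by positivity))).trans
        (mul_le_mul_of_nonneg_left ih hq)
  set k := ⌊(t - s) / T⌋₊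
  have hk : s + k * T ≤ t := by
    have := Nat.floor_le (div_nonneg (sub_nonneg.2 hst) hT.le)
    rw [le_div_iff₀ hT] at this
    linarith
  exact (hf (le_add_of_nonneg_right (by positivity) : s ≤ s + k * T) hst hk).trans (hiter k)

section

variable {ι : Type*} [Fintype ι]

open scoped MatrixOrder in
theorem Matrix.PosSemidef.dotProduct_mulVec_le_trace_mul {M : Matrix ι ι ℝ}
    (hM : M.PosSemidef) (w : ι → ℝ) : w ⬝ᵥ M *ᵥ w ≤ M.trace * ∑ i, w i ^ 2 := by
  classical
  obtain ⟨B, rfl⟩ := CStarAlgebra.nonneg_iff_eq_star_mul_self.mp hM.nonneg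
  rw [star_eq_conjTranspose, conjTranspose_eq_transpose_of_trivial]
  have hquad : w ⬝ᵥ (Bᵀ * B) *ᵥ w = ∑ k, (∑ j, B k j * w j) ^ 2 := by
    rw [← mulVec_mulVec, dotProduct_mulVec, vecMul_transpose]
    simp only [dotProduct, mulVec, sq]
  have htrace : (Bᵀ * B).trace = ∑ k, ∑ j, B k j ^ 2 := by
    rw [trace_mul_comm]
    simp only [trace, diag, mul_apply, transpose_apply, sq]
  rw [hquad, htrace, Finset.sum_mul]
  exact Finset.sum_le_sum fun k _ => Finset.sum_mul_sq_le_sq_mul_sq _ _ _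

theorem sum_sq_pos_of_ne_zero {w : ι → ℝ} (hw : w ≠ 0) : 0 < ∑ i, w i ^ 2 := by
  obtain ⟨i, hi⟩ := Function.ne_iff.1 hw
  exact Finset.sum_pos' (fun j _ => sq_nonneg _) ⟨i, Finset.mem_univ i, sq_pos_of_ne_zero hi⟩

theorem HasDerivAt.mulVec_const {m : Type*} {F : ℝ → Matrix m ι ℝ} {F' : Matrix m ι ℝ} {t : ℝ}
    (hF : HasDerivAt F F' t) (v : ι → ℝ) : HasDerivAt (fun τ => F τ *ᵥ v) (F' *ᵥ v) t := by
  rw [hasDerivAt_pi]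
  intro i
  exact HasDerivAt.fun_sum fun j _ => (hasDerivAt_pi.1 (hasDerivAt_pi.1 hF i) j).mul_const (v j)

theorem HasDerivAt.sum_sq {x : ℝ → ι → ℝ} {x' : ι → ℝ} {t : ℝ} (hx : HasDerivAt x x' t) :
    HasDerivAt (fun τ => ∑ i, x τ i ^ 2) (2 * (x t ⬝ᵥ x')) t := by
  refine (HasDerivAt.fun_sum fun i _ => (hasDerivAt_pi.1 hx i).pow 2).congr_deriv ?_
  simp only [dotProduct, Finset.mul_sum]
  exact Finset.sum_congr rfl fun i _ => by push_cast; ring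

noncomputable def l2Normalize (x : ι → ℝ) : ι → ℝ := (√(∑ i, x i ^ 2))⁻¹ • x

theorem sum_sq_l2Normalize {x : ι → ℝ} (hx : x ≠ 0) : ∑ i, l2Normalize x i ^ 2 = 1 := by
  have hpos := sum_sq_pos_of_ne_zero hx
  simp only [l2Normalize, Pi.smul_apply, smul_eq_mul, mul_pow, ← Finset.mul_sum, inv_pow,
    sq_sqrt hpos.le]
  exact inv_mul_cancel₀ hpos.ne'

theorem l2Normalize_dotProduct_mulVec (M : Matrix ι ι ℝ) (x : ι → ℝ) :
    l2Normalize x ⬝ᵥ M *ᵥ l2Normalize x = (x ⬝ᵥ M *ᵥ x) / ∑ i, x i ^ 2 := by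
  simp only [l2Normalize, mulVec_smul, smul_dotProduct, dotProduct_smul, smul_eq_mul]
  rw [← mul_assoc, ← mul_inv, ← sq, sq_sqrt (Finset.sum_nonneg fun i _ => sq_nonneg _),
    inv_mul_eq_div]

theorem hasDerivAt_l2Normalize {M : Matrix ι ι ℝ} {x : ℝ → ι → ℝ} {t : ℝ}
    (hx : HasDerivAt x (-(M *ᵥ x t)) t) (ht : x t ≠ 0) :
    HasDerivAt (fun τ => l2Normalize (x τ))
      (-(M *ᵥ l2Normalize (x t)) + (l2Normalize (x t) ⬝ᵥ M *ᵥ l2Normalize (x t)) •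
        l2Normalize (x t)) t := by
  have hpos := sum_sq_pos_of_ne_zero ht
  have hr := ((hx.sum_sq.sqrt hpos.ne').inv (sqrt_pos.2 hpos).ne').smul hx
  refine hr.congr_deriv ?_
  rw [l2Normalize_dotProduct_mulVec]
  ext i
  simp only [l2Normalize, Pi.add_apply, Pi.neg_apply, Pi.smul_apply, Pi.inv_apply, smul_eq_mul,
    mulVec_smul, dotProduct_neg]
  have hsq := sq_sqrt hpos.le
  have hr0 := (sqrt_pos.2 hpos).ne'
  set r := √(∑ i, x t i ^ 2)
  rw [← hsq]
  field_simp

theorem ne_zero_of_hasDerivAt_neg_mulVec {S : ℝ → Matrix ι ι ℝ} {x : ℝ → ι → ℝ} {s t : ℝ}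
    (hst : s ≤ t) (hS : ∀ τ ∈ Icc s t, (S τ).PosSemidef)
    (htr : IntervalIntegrable (fun τ => (S τ).trace) volume s t)
    (hx : ∀ τ ∈ Icc s t, HasDerivAt x (-(S τ *ᵥ x τ)) τ) (hs : x s ≠ 0) : x t ≠ 0 := by
  have hpos := pos_of_hasDerivAt_of_neg_mul_le hst (fun τ hτ => (hx τ hτ).sum_sq)
    (htr.const_mul 2) (fun τ hτ => mul_nonneg zero_le_two (hS τ hτ).trace_nonneg)
    (fun τ hτ => by
      have := (hS τ hτ).dotProduct_mulVec_le_trace_mul (x τ)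
      rw [dotProduct_neg]
      linarith)
    (sum_sq_pos_of_ne_zero hs)
  rintro h
  simp [h] at hpos

theorem antitoneOn_sum_sq_of_hasDerivAt_neg_mulVec {S : ℝ → Matrix ι ι ℝ} {x : ℝ → ι → ℝ}
    {D : Set ℝ} (hD : Convex ℝ D) (hS : ∀ τ ∈ D, (S τ).PosSemidef)
    (hx : ∀ τ ∈ D, HasDerivAt x (-(S τ *ᵥ x τ)) τ) :
    AntitoneOn (fun τ => ∑ i, x τ i ^ 2) D := by
  refine antitoneOn_of_hasDerivWithinAt_nonpos hD
    (fun τ hτ => (hx τ hτ).sum_sq.continuousAt.continuousWithinAt)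
    (fun τ hτ => (hx τ (interior_subset hτ)).sum_sq.hasDerivWithinAt) fun τ hτ => ?_
  have := (hS τ (interior_subset hτ)).dotProduct_mulVec_nonneg (x τ)
  simp only [star_trivial, dotProduct_neg] at this ⊢
  linarith

theorem intervalIntegrable_trace_of_posSemidef_sub_smul_one [DecidableEq ι]
    {S : ℝ → Matrix ι ι ℝ} {a p q : ℝ} (ha : 0 < a)
    (h : ((of fun i j => ∫ τ in p..q, S τ i j) - a • (1 : Matrix ι ι ℝ)).PosSemidef) :
    IntervalIntegrable (fun τ => (S τ).trace) volume p q := by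
  have hdiag : ∀ i, IntervalIntegrable (fun τ => S τ i i) volume p q := fun i => by
    by_contra hi
    have := h.diag_nonneg (i := i)
    simp only [Matrix.sub_apply, of_apply, Matrix.smul_apply, one_apply_eq, integral_undef hi,
      smul_eq_mul, mul_one, zero_sub, Left.nonneg_neg_iff] at this
    linarith
  simpa only [trace, diag, Finset.sum_fn] using
    IntervalIntegrable.sum Finset.univ fun i _ => hdiag i

theorem exists_measurable_eqOn_of_hasDerivAt_neg_mul [DecidableEq ι] {F S : ℝ → Matrix ι ι ℝ}
    {A : Set ℝ} (hF : ∀ τ, HasDerivAt F (-S τ * F τ) τ) (hA : ∀ τ ∈ A, IsUnit (F τ).det) :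
    ∃ S' : ℝ → Matrix ι ι ℝ, (∀ i j, Measurable fun τ => S' τ i j) ∧ EqOn S' S A := by
  have hcont : Continuous F := continuous_iff_continuousAt.2 fun τ => (hF τ).continuousAt
  refine ⟨fun τ => -(of fun i j => deriv (fun σ => F σ i j) τ) * (F τ)⁻¹, fun i j => ?_,
    fun τ hτ => ?_⟩
  · have hinv : ∀ k, Measurable fun τ => (F τ)⁻¹ k j := fun k => by
      simp only [inv_def, Matrix.smul_apply, Ring.inverse_eq_inv', smul_eq_mul]
      exact hcont.matrix_det.measurable.inv.mul (hcont.matrix_adjugate.matrix_elem k j).measurable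
    simp only [mul_apply]
    exact Finset.measurable_sum _ fun k _ => (measurable_deriv _).neg.mul (hinv k)
  · have : (of fun i j => deriv (fun σ => F σ i j) τ) = -S τ * F τ := by
      ext i j
      exact (hasDerivAt_pi.1 (hasDerivAt_pi.1 (hF τ) i) j).deriv
    simp only [this, neg_mul, neg_neg, Matrix.mul_assoc, mul_nonsing_inv _ (hA τ hτ), mul_one]

end

section

variable {n : ℕ} {a b T : ℝ}

theorem bddBelow_costSet (hT : 0 ≤ T) : BddBelow (costSet a b T n) := by
  refine ⟨0, ?_⟩
  rintro J ⟨S, ω, -, hS, -, -, -, -, rfl⟩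
  refine integral_nonneg hT fun t ht => ?_
  simpa using (hS t ht).dotProduct_mulVec_nonneg (ω t)

theorem sqrt_sum_sq_le_exp_neg_sInf_costSet_mul (hT : 0 ≤ T) {S : ℝ → Matrix (Fin n) (Fin n) ℝ}
    (hSmeas : ∀ i j, Measurable fun t => S t i j) (hS : ∀ t ∈ Icc 0 T, (S t).PosSemidef)
    (hlow : ((of fun i j => ∫ t in (0:ℝ)..T, S t i j) -
      a • (1 : Matrix (Fin n) (Fin n) ℝ)).PosSemidef)
    (hup : (b • (1 : Matrix (Fin n) (Fin n) ℝ) -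
      of fun i j => ∫ t in (0:ℝ)..T, S t i j).PosSemidef)
    {x : ℝ → Fin n → ℝ} (hx : ∀ t ∈ Icc 0 T, HasDerivAt x (-(S t *ᵥ x t)) t)
    (hx0 : ∀ t ∈ Icc 0 T, x t ≠ 0) :
    √(∑ i, x T i ^ 2) ≤ exp (-sInf (costSet a b T n)) * √(∑ i, x 0 i ^ 2) := by
  have hpos : ∀ t ∈ Icc 0 T, 0 < ∑ i, x t i ^ 2 := fun t ht => sum_sq_pos_of_ne_zero (hx0 t ht)
  have hderiv : ∀ t ∈ Icc 0 T, HasDerivAt (fun τ => -log (∑ i, x τ i ^ 2) / 2)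
      (l2Normalize (x t) ⬝ᵥ S t *ᵥ l2Normalize (x t)) t := fun t ht => by
    refine (((hx t ht).sum_sq.log (hpos t ht).ne').neg.div_const 2).congr_deriv ?_
    rw [l2Normalize_dotProduct_mulVec, dotProduct_neg]
    ring
  have hcost : ∫ t in (0:ℝ)..T, l2Normalize (x t) ⬝ᵥ S t *ᵥ l2Normalize (x t)
      = (log (∑ i, x 0 i ^ 2) - log (∑ i, x T i ^ 2)) / 2 := by
    have hIcc : ∀ t ∈ uIcc 0 T, t ∈ Icc 0 T := fun t ht => by rwa [uIcc_of_le hT] at ht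
    have hIoo : ∀ t ∈ Ioo (min 0 T) (max 0 T), t ∈ Icc 0 T := fun t ht =>
      hIcc t (Ioo_subset_Icc_self ht)
    rw [integral_eq_sub_of_hasDerivAt (fun t ht => hderiv t (hIcc t ht))
      (intervalIntegrable_deriv_of_nonneg
        (fun t ht => (hderiv t (hIcc t ht)).continuousAt.continuousWithinAt)
        (fun t ht => hderiv t (hIoo t ht))
        (fun t ht => by simpa using (hS t (hIoo t ht)).dotProduct_mulVec_nonneg _))]
    ring
  have hmem : (∫ t in (0:ℝ)..T, l2Normalize (x t) ⬝ᵥ S t *ᵥ l2Normalize (x t)) ∈ costSet a b T n :=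
    ⟨S, fun t => l2Normalize (x t), hSmeas, hS, hlow, hup,
      sum_sq_l2Normalize (hx0 0 ⟨le_rfl, hT⟩),
      fun t ht => hasDerivAt_l2Normalize (hx t ht) (hx0 t ht), rfl⟩
  have hμ := csInf_le (bddBelow_costSet hT) hmem
  rw [hcost] at hμ
  rw [sqrt_eq_rpow, sqrt_eq_rpow, rpow_def_of_pos (hpos T ⟨hT, le_rfl⟩),
    rpow_def_of_pos (hpos 0 ⟨le_rfl, hT⟩), ← exp_add]
  exact exp_le_exp.2 (by linarith)

theorem sqrt_sum_sq_add_le_exp_neg_sInf_costSet_mul (hT : 0 ≤ T) {p : ℝ}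
    {S : ℝ → Matrix (Fin n) (Fin n) ℝ}
    (hSmeas : ∃ S' : ℝ → Matrix (Fin n) (Fin n) ℝ,
      (∀ i j, Measurable fun t => S' t i j) ∧ EqOn S' S (Icc p (p + T)))
    (hS : ∀ t ∈ Icc p (p + T), (S t).PosSemidef)
    (hlow : ((of fun i j => ∫ t in p..(p + T), S t i j) -
      a • (1 : Matrix (Fin n) (Fin n) ℝ)).PosSemidef)
    (hup : (b • (1 : Matrix (Fin n) (Fin n) ℝ) -
      of fun i j => ∫ t in p..(p + T), S t i j).PosSemidef)
    {x : ℝ → Fin n → ℝ} (hx : ∀ t ∈ Icc p (p + T), HasDerivAt x (-(S t *ᵥ x t)) t)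
    (hx0 : ∀ t ∈ Icc p (p + T), x t ≠ 0) :
    √(∑ i, x (p + T) i ^ 2) ≤ exp (-sInf (costSet a b T n)) * √(∑ i, x p i ^ 2) := by
  obtain ⟨S', hS'meas, hS'S⟩ := hSmeas
  have hshift : ∀ u ∈ Icc 0 T, p + u ∈ Icc p (p + T) := fun u hu =>
    ⟨by linarith [hu.1], by linarith [hu.2]⟩
  have hint : (of fun i j => ∫ u in (0:ℝ)..T, S' (p + u) i j)
      = of fun i j => ∫ t in p..(p + T), S t i j := by
    ext i j
    rw [of_apply, of_apply, integral_comp_add_left (fun t => S' t i j), add_zero]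
    refine integral_congr fun t ht => ?_
    rw [uIcc_of_le (by linarith)] at ht
    simp only [hS'S ht]
  simpa using sqrt_sum_sq_le_exp_neg_sInf_costSet_mul hT (S := fun u => S' (p + u))
    (x := fun u => x (p + u)) (fun i j => (hS'meas i j).comp (measurable_const_add p))
    (fun u hu => hS'S (hshift u hu) ▸ hS _ (hshift u hu)) (hint ▸ hlow) (hint ▸ hup)
    (fun u hu => by
      rw [hS'S (hshift u hu)]
      exact (hx _ (hshift u hu)).comp_const_add p u)
    (fun u hu => hx0 _ (hshift u hu))

end

theorem fundamental_matrix_decay_general (n : ℕ) (a b T : ℝ) (ha : 0 < a)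
    (hT : 0 < T)
    (S : ℝ → Matrix (Fin n) (Fin n) ℝ)
    (hSpsd : ∀ t, 0 ≤ t → (S t).PosSemidef)
    (hPE : ∀ t, 0 ≤ t →
      ((Matrix.of fun i j => ∫ τ in t..(t + T), S τ i j)
          - a • (1 : Matrix (Fin n) (Fin n) ℝ)).PosSemidef ∧
      (b • (1 : Matrix (Fin n) (Fin n) ℝ)
          - Matrix.of fun i j => ∫ τ in t..(t + T), S τ i j).PosSemidef)
    (Φ : ℝ → ℝ → Matrix (Fin n) (Fin n) ℝ)
    (hΦ0 : ∀ s, Φ s s = 1)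
    (hΦ : ∀ s t, HasDerivAt (fun τ => Φ τ s) (-(S t) * Φ t s) t) :
    ∀ s t, 0 ≤ s → s ≤ t → ∀ v : Fin n → ℝ,
      Real.sqrt (∑ i, ((Φ t s).mulVec v i) ^ 2)
        ≤ Real.exp (-(sInf (costSet a b T n)) * (⌊(t - s) / T⌋ : ℝ))
            * Real.sqrt (∑ i, v i ^ 2) := by
  intro s t hs hst v
  rcases eq_or_ne v 0 with rfl | hv
  · simp
  have htr : ∀ p q, 0 ≤ p → p ≤ q → IntervalIntegrable (fun τ => (S τ).trace) volume p q :=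
    fun p q hp hpq => intervalIntegrable_of_forall_window hT (fun r hr =>
      intervalIntegrable_trace_of_posSemidef_sub_smul_one ha (hPE r (hp.trans hr)).1) hpq
  have hsol : ∀ r w τ, HasDerivAt (fun τ => Φ τ r *ᵥ w) (-(S τ *ᵥ (Φ τ r *ᵥ w))) τ :=
    fun r w τ => by simpa [neg_mulVec] using (hΦ r τ).mulVec_const w
  have hne : ∀ r, 0 ≤ r → ∀ w ≠ 0, ∀ τ, r ≤ τ → Φ τ r *ᵥ w ≠ 0 := fun r hr w hw τ hτ =>
    ne_zero_of_hasDerivAt_neg_mulVec hτ (fun σ hσ => hSpsd σ (hr.trans hσ.1)) (htr r τ hr hτ)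
      (fun σ _ => hsol r w σ) (by rwa [hΦ0, one_mulVec])
  obtain ⟨Sm, hSm, hSmS⟩ := exists_measurable_eqOn_of_hasDerivAt_neg_mul (hΦ 0) (A := Ici 0)
    fun τ hτ => isUnit_iff_ne_zero.2 fun hdet => by
      obtain ⟨w, hw, hΦw⟩ := exists_mulVec_eq_zero_iff.2 hdet
      exact hne 0 le_rfl w hw τ hτ hΦw
  have hwindow : ∀ p, s ≤ p → √(∑ i, (Φ (p + T) s *ᵥ v) i ^ 2)
      ≤ exp (-sInf (costSet a b T n)) * √(∑ i, (Φ p s *ᵥ v) i ^ 2) := fun p hp =>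
    sqrt_sum_sq_add_le_exp_neg_sInf_costSet_mul hT.le
      ⟨Sm, hSm, hSmS.mono fun τ hτ => (hs.trans hp).trans hτ.1⟩
      (fun τ hτ => hSpsd τ ((hs.trans hp).trans hτ.1)) (hPE p (hs.trans hp)).1
      (hPE p (hs.trans hp)).2 (fun τ _ => hsol s v τ) (fun τ hτ => hne s hs v hv τ (hp.trans hτ.1))
  have hanti : AntitoneOn (fun τ => √(∑ i, (Φ τ s *ᵥ v) i ^ 2)) (Ici s) :=
    Real.sqrt_monotone.comp_antitoneOn
      (antitoneOn_sum_sq_of_hasDerivAt_neg_mulVec (convex_Ici s)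
        (fun τ hτ => hSpsd τ (hs.trans hτ)) fun τ _ => hsol s v τ)
  rw [← natCast_floor_eq_intCast_floor (div_nonneg (sub_nonneg.2 hst) hT.le),
    mul_comm (-sInf _), exp_nat_mul]
  simpa [hΦ0] using hanti.le_pow_floor_mul hT (exp_pos _).le hwindow hst

/-- If `S` satisfies the persistent excitation condition on windows of length `T`
and `μ = μ(a,b,n)` is the minimal cost of the one-period optimal control problem,
then the fundamental matrix satisfies `‖Φ(t,s)v‖ ≤ e^{-μ⌊(t-s)/T⌋}‖v‖` for all
`t ≥ s ≥ 0` (Euclidean norms), i.e. `‖Φ(t,s)‖ ≤ e^{-μ⌊(t-s)/T⌋}`. -/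
theorem fundamental_matrix_decay (n : ℕ) (a b T : ℝ) (ha : 0 < a) (hab : a ≤ b)
    (hT : 0 < T)
    (S : ℝ → Matrix (Fin n) (Fin n) ℝ)
    (hSpsd : ∀ t, 0 ≤ t → (S t).PosSemidef)
    (hPE : ∀ t, 0 ≤ t →
      ((Matrix.of fun i j => ∫ τ in t..(t + T), S τ i j)
          - a • (1 : Matrix (Fin n) (Fin n) ℝ)).PosSemidef ∧
      (b • (1 : Matrix (Fin n) (Fin n) ℝ)
          - Matrix.of fun i j => ∫ τ in t..(t + T), S τ i j).PosSemidef)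
    (Φ : ℝ → ℝ → Matrix (Fin n) (Fin n) ℝ)
    (hΦ0 : ∀ s, Φ s s = 1)
    (hΦ : ∀ s t, HasDerivAt (fun τ => Φ τ s) (-(S t) * Φ t s) t) :
    ∀ s t, 0 ≤ s → s ≤ t → ∀ v : Fin n → ℝ,
      Real.sqrt (∑ i, ((Φ t s).mulVec v i) ^ 2)
        ≤ Real.exp (-(sInf (costSet a b T n)) * (⌊(t - s) / T⌋ : ℝ))
            * Real.sqrt (∑ i, v i ^ 2) :=
  fundamental_matrix_decay_general n a b T ha hT S hSpsd hPE Φ hΦ0 hΦ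
end
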